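/- Let f(n, k) denote the number of words in [k]^n avoiding the pattern 122. Then for every integer k ≥ 0, the identity (∑_{n ≥ 0} f(n, k)·x^n) · ((1 - x²)^k - (1 - x)) = x holds as an identity of formal power series over ℚ. -/
import Mathlib


open PowerSeries

/-- The `i`-th letter (1-based value in `{1,…,k}`) of a word `w ∈ [k]^n`,
with value `0` outside the word. -/
def letter {n k : ℕ} (w : Fin n → Fin k) (i : ℕ) : ℕ :=
  if h : i < n then (w ⟨i, h⟩ : ℕ) + 1 else 0

/-- `w` avoids the pattern 122: there is no 0-based index `i` with `i + 2 < n`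
such that `w i < w (i+1)` and `w (i+1) = w (i+2)`. -/
def Avoids122 {n k : ℕ} (w : Fin n → Fin k) : Prop :=
  ∀ i : ℕ, i + 2 < n →
    ¬ (letter w i < letter w (i + 1) ∧ letter w (i + 1) = letter w (i + 2))

/-- The number of words in `[k]^n` avoiding 122. -/
noncomputable def f (n k : ℕ) : ℕ := Nat.card {w : Fin n → Fin k // Avoids122 w}

/-! ### Auxiliary counts -/

/-- Number of avoiding words of length `n+1` whose last letter is `c`. -/
noncomputable def gg (k n : ℕ) (c : Fin k) : ℕ :=
  Nat.card {w : Fin (n + 1) → Fin k // Avoids122 w ∧ w (Fin.last n) = c}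

/-- Number of avoiding words of length `n+1` ending with an ascent to the letter `c`. -/
noncomputable def aa (k n : ℕ) (c : Fin k) : ℕ :=
  Nat.card {w : Fin (n + 1) → Fin k //
    Avoids122 w ∧ letter w (n - 1) < letter w n ∧ letter w n = (c : ℕ) + 1}

lemma letter_snoc_of_lt {n k : ℕ} (v : Fin (n + 1) → Fin k) (c : Fin k) {i : ℕ}
    (h : i < n + 1) :
    letter (Fin.snoc v c : Fin (n + 2) → Fin k) i = letter v i := by
  have h2 : i < n + 2 := by omega
  simp only [letter, dif_pos h, dif_pos h2]
  have : (⟨i, h2⟩ : Fin (n + 2)) = Fin.castSucc ⟨i, h⟩ := rfl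
  rw [this, Fin.snoc_castSucc]

lemma letter_snoc_last {n k : ℕ} (v : Fin (n + 1) → Fin k) (c : Fin k) :
    letter (Fin.snoc v c : Fin (n + 2) → Fin k) (n + 1) = (c : ℕ) + 1 := by
  simp only [letter, dif_pos (by omega : n + 1 < n + 2)]
  have : (⟨n + 1, by omega⟩ : Fin (n + 2)) = Fin.last (n + 1) := rfl
  rw [this, Fin.snoc_last]

lemma avoids_snoc {n k : ℕ} (v : Fin (n + 1) → Fin k) (c : Fin k) :
    Avoids122 (Fin.snoc v c : Fin (n + 2) → Fin k) ↔
      Avoids122 v ∧ ¬(letter v (n - 1) < letter v n ∧ letter v n = (c : ℕ) + 1) := by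
  constructor
  · intro H
    refine ⟨fun i hi => ?_, ?_⟩
    · have := H i (by omega)
      rwa [letter_snoc_of_lt v c (by omega), letter_snoc_of_lt v c (by omega),
        letter_snoc_of_lt v c (by omega)] at this
    · rcases Nat.eq_zero_or_pos n with rfl | hn
      · exact fun h => lt_irrefl _ h.1
      · have := H (n - 1) (by omega)
        have e1 : n - 1 + 1 = n := by omega
        have e2 : n - 1 + 2 = n + 1 := by omega
        rw [e1, e2, letter_snoc_of_lt v c (by omega), letter_snoc_of_lt v c (by omega),
          letter_snoc_last] at this
        exact this
  · rintro ⟨Hv, Hend⟩ i hi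
    rcases lt_or_eq_of_le (by omega : i + 2 ≤ n + 1) with h | h
    · rw [letter_snoc_of_lt v c (by omega), letter_snoc_of_lt v c (by omega),
        letter_snoc_of_lt v c (by omega)]
      exact Hv i h
    · have hi' : i = n - 1 := by omega
      have e1 : i + 1 = n := by omega
      have e2 : i + 2 = n + 1 := by omega
      rw [e1, e2, letter_snoc_of_lt v c (by omega), letter_snoc_of_lt v c (by omega),
        letter_snoc_last, hi']
      exact Hend

/-- General fiber-counting helper. -/
lemma card_piece {α : Type*} [Finite α] {k : ℕ} (p : α → Prop) (φ : α → Fin k)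
    (s : Finset (Fin k)) :
    Nat.card {x : α // p x ∧ φ x ∈ s} = ∑ b ∈ s, Nat.card {x : α // p x ∧ φ x = b} := by
  classical
  cases nonempty_fintype α
  simp_rw [Nat.card_eq_fintype_card, Fintype.card_subtype]
  rw [Finset.card_eq_sum_card_fiberwise (f := φ) (t := s)
    (fun x hx => (Finset.mem_filter.mp hx).2.2)]
  refine Finset.sum_congr rfl fun b hb => ?_
  congr 1
  ext x
  simp only [Finset.mem_filter, Finset.mem_univ, true_and]
  constructor
  · rintro ⟨⟨hp, -⟩, he⟩; exact ⟨hp, he⟩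
  · rintro ⟨hp, he⟩; exact ⟨⟨hp, he ▸ hb⟩, he⟩

lemma f_zero (k : ℕ) : f 0 k = 1 := by
  have e : {w : Fin 0 → Fin k // Avoids122 w} ≃ Unit :=
    { toFun := fun _ => Unit.unit
      invFun := fun _ => ⟨finZeroElim, fun i hi => by omega⟩
      left_inv := fun w => Subtype.ext (funext fun i => i.elim0)
      right_inv := fun _ => rfl }
  unfold f
  rw [Nat.card_congr e]
  simp

lemma gg_zero (k : ℕ) (c : Fin k) : gg k 0 c = 1 := by
  have e : {w : Fin 1 → Fin k // Avoids122 w ∧ w (Fin.last 0) = c} ≃ Unit :=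
    { toFun := fun _ => Unit.unit
      invFun := fun _ => ⟨fun _ => c, fun i hi => by omega, rfl⟩
      left_inv := fun w => Subtype.ext (funext fun i => by
        have : i = Fin.last 0 := Subsingleton.elim _ _
        rw [this]; exact w.2.2.symm)
      right_inv := fun _ => rfl }
  unfold gg
  rw [Nat.card_congr e]
  simp

lemma aa_zero (k : ℕ) (c : Fin k) : aa k 0 c = 0 := by
  have e : IsEmpty {w : Fin 1 → Fin k //
      Avoids122 w ∧ letter w (0 - 1) < letter w 0 ∧ letter w 0 = (c : ℕ) + 1} := by
    refine ⟨fun w => ?_⟩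
    have := w.2.2.1
    simp only [Nat.zero_sub] at this
    exact lt_irrefl _ this
  simp [aa, Nat.card_of_isEmpty]

lemma f_sum (k n : ℕ) : f (n + 1) k = ∑ b : Fin k, gg k n b := by
  have h := card_piece (α := Fin (n + 1) → Fin k) Avoids122 (fun w => w (Fin.last n))
    Finset.univ
  have e : {w : Fin (n + 1) → Fin k // Avoids122 w} ≃
      {w : Fin (n + 1) → Fin k // Avoids122 w ∧ w (Fin.last n) ∈ (Finset.univ : Finset (Fin k))} :=
    Equiv.subtypeEquivRight (fun w => by simp)
  rw [f, Nat.card_congr e, h]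
  rfl

lemma f_split (k n : ℕ) (c : Fin k) : f (n + 1) k = gg k (n + 1) c + aa k n c := by
  classical
  have E : {v : Fin (n + 1) → Fin k // Avoids122 v} ≃
      {w : Fin (n + 2) → Fin k // Avoids122 w ∧ w (Fin.last (n + 1)) = c} ⊕
      {v : Fin (n + 1) → Fin k //
        Avoids122 v ∧ letter v (n - 1) < letter v n ∧ letter v n = (c : ℕ) + 1} :=
    { toFun := fun v =>
        if h : letter v.1 (n - 1) < letter v.1 n ∧ letter v.1 n = (c : ℕ) + 1 then
          Sum.inr ⟨v.1, v.2, h⟩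
        else
          Sum.inl ⟨Fin.snoc v.1 c, (avoids_snoc v.1 c).mpr ⟨v.2, h⟩, by simp⟩
      invFun := fun s =>
        match s with
        | Sum.inl w => ⟨Fin.init w.1, by
            have hw : Avoids122 (Fin.snoc (Fin.init w.1) c : Fin (n + 2) → Fin k) := by
              have := w.2.1
              rwa [← Fin.snoc_init_self w.1, w.2.2] at this
            exact ((avoids_snoc _ c).mp hw).1⟩
        | Sum.inr v => ⟨v.1, v.2.1⟩
      left_inv := fun v => by
        dsimp only
        split_ifs with h
        · rfl
        · exact Subtype.ext (by simp)
      right_inv := fun s => by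
        rcases s with ⟨w, hw, hl⟩ | ⟨v, hv, hcond⟩
        · have heq : Fin.snoc (Fin.init w) c = w := by
            have h0 := Fin.snoc_init_self w
            rwa [hl] at h0
          have hw' : Avoids122 (Fin.snoc (Fin.init w) c : Fin (n + 2) → Fin k) := by
            rwa [heq]
          dsimp only
          rw [dif_neg ((avoids_snoc _ c).mp hw').2]
          congr 1
          exact Subtype.ext heq
        · dsimp only
          rw [dif_pos hcond] }
  rw [f, Nat.card_congr E, Nat.card_sum]
  rfl

lemma aa_succ (k n : ℕ) (c : Fin k) :
    aa k (n + 1) c = ∑ b ∈ Finset.univ.filter (· < c), gg k n b := by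
  classical
  have hlt : ∀ (v : Fin (n + 1) → Fin k), v (Fin.last n) < c →
      ¬(letter v (n - 1) < letter v n ∧ letter v n = (c : ℕ) + 1) := by
    intro v hv h
    have : letter v n = (v (Fin.last n) : ℕ) + 1 := by
      simp only [letter, dif_pos (by omega : n < n + 1)]
      rfl
    rw [this] at h
    have := h.2
    omega
  have E : {w : Fin (n + 2) → Fin k //
      Avoids122 w ∧ letter w (n + 1 - 1) < letter w (n + 1) ∧
        letter w (n + 1) = (c : ℕ) + 1} ≃
      {v : Fin (n + 1) → Fin k // Avoids122 v ∧ v (Fin.last n) < c} :=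
    { toFun := fun w => by
        refine ⟨Fin.init w.1, ?_, ?_⟩
        · have hlast : w.1 (Fin.last (n + 1)) = c := by
            have := w.2.2.2
            simp only [letter, dif_pos (by omega : n + 1 < n + 2)] at this
            have hv : ((w.1 ⟨n + 1, by omega⟩ : Fin k) : ℕ) = (c : ℕ) := by omega
            exact Fin.ext hv
          have hw : Avoids122 (Fin.snoc (Fin.init w.1) c : Fin (n + 2) → Fin k) := by
            have := w.2.1
            rwa [← Fin.snoc_init_self w.1, hlast] at this
          exact ((avoids_snoc _ c).mp hw).1
        · have h1 := w.2.2.1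
          have h2 := w.2.2.2
          simp only [Nat.add_sub_cancel] at h1
          simp only [letter, dif_pos (by omega : n < n + 2),
            dif_pos (by omega : n + 1 < n + 2)] at h1 h2
          have : (Fin.init w.1) (Fin.last n) = w.1 ⟨n, by omega⟩ := rfl
          rw [Fin.lt_def, this]
          omega
      invFun := fun v => by
        refine ⟨Fin.snoc v.1 c, (avoids_snoc v.1 c).mpr ⟨v.2.1, hlt v.1 v.2.2⟩, ?_, ?_⟩
        · have e1 : n + 1 - 1 = n := by omega
          rw [e1, letter_snoc_of_lt v.1 c (by omega), letter_snoc_last]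
          have : letter v.1 n = (v.1 (Fin.last n) : ℕ) + 1 := by
            simp only [letter, dif_pos (by omega : n < n + 1)]
            rfl
          rw [this]
          have := v.2.2
          rw [Fin.lt_def] at this
          omega
        · rw [letter_snoc_last]
      left_inv := fun w => by
        have hlast : w.1 (Fin.last (n + 1)) = c := by
          have := w.2.2.2
          simp only [letter, dif_pos (by omega : n + 1 < n + 2)] at this
          have hv : ((w.1 ⟨n + 1, by omega⟩ : Fin k) : ℕ) = (c : ℕ) := by omega
          exact Fin.ext hv
        refine Subtype.ext ?_
        show Fin.snoc (Fin.init w.1) c = w.1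
        have h0 := Fin.snoc_init_self w.1
        rwa [hlast] at h0
      right_inv := fun v => Subtype.ext (by simp) }
  have h2 := card_piece (α := Fin (n + 1) → Fin k) Avoids122 (fun v => v (Fin.last n))
    (Finset.univ.filter (· < c))
  have e2 : {v : Fin (n + 1) → Fin k // Avoids122 v ∧ v (Fin.last n) < c} ≃
      {v : Fin (n + 1) → Fin k //
        Avoids122 v ∧ v (Fin.last n) ∈ Finset.univ.filter (· < c)} :=
    Equiv.subtypeEquivRight (fun v => by simp)
  rw [aa, Nat.card_congr E, Nat.card_congr e2, h2]
  rfl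

lemma gg_one (k : ℕ) (c : Fin k) : gg k 1 c = f 1 k := by
  have h1 : f 1 k = gg k 1 c + aa k 0 c := f_split k 0 c
  rw [aa_zero] at h1
  omega

lemma gg_rec (k m : ℕ) (c : Fin k) :
    gg k (m + 2) c + ∑ b ∈ Finset.univ.filter (· < c), gg k m b = f (m + 2) k := by
  have h1 : f (m + 2) k = gg k (m + 2) c + aa k (m + 1) c := f_split k (m + 1) c
  rw [aa_succ] at h1
  omega

theorem stmt14 (k : ℕ) :
    (PowerSeries.mk fun n => (f n k : ℚ)) * ((1 - X ^ 2) ^ k - (1 - X)) =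
      (X : PowerSeries ℚ) := by
  classical
  set F : PowerSeries ℚ := PowerSeries.mk fun n => (f n k : ℚ) with hF
  set G : Fin k → PowerSeries ℚ := fun c => PowerSeries.mk fun n => (gg k n c : ℚ) with hG
  -- P1 : F = 1 + X * ∑ G
  have P1 : F = 1 + X * ∑ c : Fin k, G c := by
    ext n
    cases n with
    | zero =>
      simp [hF, hG, coeff_mk, f_zero]
    | succ n =>
      rw [map_add, coeff_succ_X_mul]
      simp only [hF, hG, coeff_mk, map_sum]
      rw [coeff_one, if_neg (Nat.succ_ne_zero n)]
      rw [f_sum]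
      push_cast
      ring
  -- P2 : ∀ c, G c + X^2 * ∑_{b<c} G b = F
  have P2 : ∀ c : Fin k,
      G c + X ^ 2 * ∑ b ∈ Finset.univ.filter (· < c), G b = F := by
    intro c
    ext n
    rw [map_add]
    match n with
    | 0 =>
      rw [coeff_X_pow_mul' _ 2 0, if_neg (by omega)]
      simp [hF, hG, coeff_mk, gg_zero, f_zero]
    | 1 =>
      rw [coeff_X_pow_mul' _ 2 1, if_neg (by omega)]
      simp only [hF, hG, coeff_mk, add_zero]
      rw [gg_one]
    | (m + 2) =>
      rw [coeff_X_pow_mul]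
      simp only [hF, hG, coeff_mk, map_sum]
      have hrec := gg_rec k m c
      have hc : ((gg k (m + 2) c : ℚ) + ∑ b ∈ Finset.univ.filter (· < c), (gg k m b : ℚ))
          = (f (m + 2) k : ℚ) := by
        rw [← Nat.cast_sum, ← Nat.cast_add, hrec]
      exact hc
  -- P3 : induction
  have P3 : ∀ m, m ≤ k →
      X ^ 2 * ∑ b ∈ Finset.univ.filter (fun b : Fin k => (b : ℕ) < m), G b =
        F * (1 - (1 - X ^ 2) ^ m) := by
    intro m
    induction m with
    | zero =>
      intro _
      have : Finset.univ.filter (fun b : Fin k => (b : ℕ) < 0) = ∅ := by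
        ext b; simp
      rw [this]
      simp
    | succ m ih =>
      intro hm
      have hmk : m < k := by omega
      have him := ih (by omega)
      set cm : Fin k := ⟨m, hmk⟩ with hcm
      have hfilter : Finset.univ.filter (fun b : Fin k => (b : ℕ) < m + 1) =
          insert cm (Finset.univ.filter (fun b : Fin k => (b : ℕ) < m)) := by
        ext b
        simp only [Finset.mem_filter, Finset.mem_univ, true_and, Finset.mem_insert]
        constructor
        · intro h
          rcases Nat.lt_succ_iff_lt_or_eq.mp h with h | h
          · exact Or.inr (by simpa using h)
          · exact Or.inl (Fin.ext h)
        · rintro (rfl | h)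
          · exact Nat.lt_succ_self m
          · omega
      have hnotmem : cm ∉ Finset.univ.filter (fun b : Fin k => (b : ℕ) < m) := by
        simp only [Finset.mem_filter, Finset.mem_univ, true_and]
        exact Nat.lt_irrefl m
      rw [hfilter, Finset.sum_insert hnotmem]
      have h2 := P2 cm
      have hflt : Finset.univ.filter (· < cm) =
          Finset.univ.filter (fun b : Fin k => (b : ℕ) < m) := by
        ext b
        simp [Fin.lt_def, hcm]
      rw [hflt] at h2
      linear_combination (1 - X ^ 2 : PowerSeries ℚ) * him + X ^ 2 * h2
  have huniv : Finset.univ.filter (fun b : Fin k => (b : ℕ) < k) = Finset.univ := by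
    ext b; simp [b.isLt]
  have h3 := P3 k le_rfl
  rw [huniv] at h3
  rw [hF] at P1 h3 ⊢
  linear_combination h3 + (X : PowerSeries ℚ) * P1
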